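/- Syntactical reference is transitive: if φ ≺ ψ and ψ ≺ χ then φ ≺ χ. -/
import Mathlib


namespace EJ

/-- Justification terms Tm(C): variables, constants, application and sum. -/
inductive Tm : Type
  | var : ℕ → Tm
  | const : ℕ → Tm
  | app : Tm → Tm → Tm
  | plus : Tm → Tm → Tm
  deriving DecidableEq

/-- Formulas Fm(C,D) of ∈_J-Logic. -/
inductive Fm : Type
  | pvar : ℕ → Fm
  | pconst : ℕ → Fm
  | imp : Fm → Fm → Fm
  | neg : Fm → Fm
  | ideq : Fm → Fm → Fm            -- φ ≡ ψ
  | ref : Fm → Fm → Fm             -- φ < ψ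
  | teq : Tm → Tm → Fm             -- s ≡ t
  | tle : Tm → Tm → Fm             -- s ≤ t
  | isTrue : Fm → Fm               -- φ : true
  | isFalse : Fm → Fm              -- φ : false
  | box : Fm → Fm                  -- □φ
  | just : Fm → Tm → Fm            -- φ : t
  | fAll : ℕ → Fm → Fm             -- ∀x.φ
  | jAll : ℕ → Fm → Fm             -- ⋀u.φ
  deriving DecidableEq

/-- variables of a term -/
def Tm.vars : Tm → Finset ℕ
  | .var u => {u}
  | .const _ => ∅
  | .app s t => s.vars ∪ t.vars
  | .plus s t => s.vars ∪ t.vars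

/-- constants of a term -/
def Tm.consts : Tm → Finset ℕ
  | .var _ => ∅
  | .const c => {c}
  | .app s t => s.consts ∪ t.consts
  | .plus s t => s.consts ∪ t.consts

/-- free propositional variables -/
def Fm.fvarP : Fm → Finset ℕ
  | .pvar x => {x}
  | .pconst _ => ∅
  | .imp φ ψ => φ.fvarP ∪ ψ.fvarP
  | .neg φ => φ.fvarP
  | .ideq φ ψ => φ.fvarP ∪ ψ.fvarP
  | .ref φ ψ => φ.fvarP ∪ ψ.fvarP
  | .teq _ _ => ∅
  | .tle _ _ => ∅
  | .isTrue φ => φ.fvarP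
  | .isFalse φ => φ.fvarP
  | .box φ => φ.fvarP
  | .just φ _ => φ.fvarP
  | .fAll x φ => φ.fvarP.erase x
  | .jAll _ φ => φ.fvarP

/-- free justification variables -/
def Fm.fvarJ : Fm → Finset ℕ
  | .pvar _ => ∅
  | .pconst _ => ∅
  | .imp φ ψ => φ.fvarJ ∪ ψ.fvarJ
  | .neg φ => φ.fvarJ
  | .ideq φ ψ => φ.fvarJ ∪ ψ.fvarJ
  | .ref φ ψ => φ.fvarJ ∪ ψ.fvarJ
  | .teq s t => s.vars ∪ t.vars
  | .tle s t => s.vars ∪ t.vars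
  | .isTrue φ => φ.fvarJ
  | .isFalse φ => φ.fvarJ
  | .box φ => φ.fvarJ
  | .just φ t => φ.fvarJ ∪ t.vars
  | .fAll _ φ => φ.fvarJ
  | .jAll u φ => φ.fvarJ.erase u

/-- propositional constants occurring in a formula -/
def Fm.pconsts : Fm → Finset ℕ
  | .pvar _ => ∅
  | .pconst d => {d}
  | .imp φ ψ => φ.pconsts ∪ ψ.pconsts
  | .neg φ => φ.pconsts
  | .ideq φ ψ => φ.pconsts ∪ ψ.pconsts
  | .ref φ ψ => φ.pconsts ∪ ψ.pconsts
  | .teq _ _ => ∅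
  | .tle _ _ => ∅
  | .isTrue φ => φ.pconsts
  | .isFalse φ => φ.pconsts
  | .box φ => φ.pconsts
  | .just φ _ => φ.pconsts
  | .fAll _ φ => φ.pconsts
  | .jAll _ φ => φ.pconsts

/-- justification constants occurring in a formula -/
def Fm.jconsts : Fm → Finset ℕ
  | .pvar _ => ∅
  | .pconst _ => ∅
  | .imp φ ψ => φ.jconsts ∪ ψ.jconsts
  | .neg φ => φ.jconsts
  | .ideq φ ψ => φ.jconsts ∪ ψ.jconsts
  | .ref φ ψ => φ.jconsts ∪ ψ.jconsts
  | .teq s t => s.consts ∪ t.consts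
  | .tle s t => s.consts ∪ t.consts
  | .isTrue φ => φ.jconsts
  | .isFalse φ => φ.jconsts
  | .box φ => φ.jconsts
  | .just φ t => φ.jconsts ∪ t.consts
  | .fAll _ φ => φ.jconsts
  | .jAll _ φ => φ.jconsts

/-- all propositional variables (free or bound) -/
def Fm.varP : Fm → Finset ℕ
  | .pvar x => {x}
  | .pconst _ => ∅
  | .imp φ ψ => φ.varP ∪ ψ.varP
  | .neg φ => φ.varP
  | .ideq φ ψ => φ.varP ∪ ψ.varP
  | .ref φ ψ => φ.varP ∪ ψ.varP
  | .teq _ _ => ∅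
  | .tle _ _ => ∅
  | .isTrue φ => φ.varP
  | .isFalse φ => φ.varP
  | .box φ => φ.varP
  | .just φ _ => φ.varP
  | .fAll x φ => insert x φ.varP
  | .jAll _ φ => φ.varP

/-- all justification variables (free or bound) -/
def Fm.varJ : Fm → Finset ℕ
  | .pvar _ => ∅
  | .pconst _ => ∅
  | .imp φ ψ => φ.varJ ∪ ψ.varJ
  | .neg φ => φ.varJ
  | .ideq φ ψ => φ.varJ ∪ ψ.varJ
  | .ref φ ψ => φ.varJ ∪ ψ.varJ
  | .teq s t => s.vars ∪ t.vars
  | .tle s t => s.vars ∪ t.vars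
  | .isTrue φ => φ.varJ
  | .isFalse φ => φ.varJ
  | .box φ => φ.varJ
  | .just φ t => φ.varJ ∪ t.vars
  | .fAll _ φ => φ.varJ
  | .jAll u φ => insert u φ.varJ

/-- A substitution: maps propositional variables/constants to formulas and
justification variables/constants to terms. -/
structure Subst where
  pv : ℕ → Fm
  jv : ℕ → Tm
  pc : ℕ → Fm
  jc : ℕ → Tm

/-- the identity substitution ε -/
def Subst.id : Subst := ⟨Fm.pvar, Tm.var, Fm.pconst, Tm.const⟩

def Subst.updP (σ : Subst) (x : ℕ) (e : Fm) : Subst :=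
  { σ with pv := Function.update σ.pv x e }

def Subst.updJ (σ : Subst) (u : ℕ) (t : Tm) : Subst :=
  { σ with jv := Function.update σ.jv u t }

def Subst.updPC (σ : Subst) (d : ℕ) (e : Fm) : Subst :=
  { σ with pc := Function.update σ.pc d e }

def Subst.updJC (σ : Subst) (c : ℕ) (t : Tm) : Subst :=
  { σ with jc := Function.update σ.jc c t }

/-- a substitution restricted to variables (identity on constants) -/
def Subst.IdOnConsts (σ : Subst) : Prop := σ.pc = Fm.pconst ∧ σ.jc = Tm.const

/-- substitution applied to a term -/
def Tm.subst : Tm → Subst → Tm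
  | .var u, σ => σ.jv u
  | .const c, σ => σ.jc c
  | .app s t, σ => .app (s.subst σ) (t.subst σ)
  | .plus s t, σ => .plus (s.subst σ) (t.subst σ)

/-- the propositional variable forced by σ w.r.t. a quantified formula:
the least variable greater than all free propositional variables of the images
under σ of the free symbols of the formula -/
def pForced (σ : Subst) (φ : Fm) : ℕ :=
  ((φ.fvarP.biUnion fun w => (σ.pv w).fvarP) ∪
   (φ.pconsts.biUnion fun w => (σ.pc w).fvarP)).sup Nat.succ

/-- the justification variable forced by σ w.r.t. a quantified formula -/
def jForced (σ : Subst) (φ : Fm) : ℕ :=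
  ((φ.fvarP.biUnion fun w => (σ.pv w).fvarJ) ∪
   (φ.pconsts.biUnion fun w => (σ.pc w).fvarJ) ∪
   (φ.fvarJ.biUnion fun w => (σ.jv w).vars) ∪
   (φ.jconsts.biUnion fun w => (σ.jc w).vars)).sup Nat.succ

/-- capture-avoiding substitution on formulas, renaming bound variables
canonically to the forced fresh variable -/
def Fm.subst : Fm → Subst → Fm
  | .pvar x, σ => σ.pv x
  | .pconst d, σ => σ.pc d
  | .imp φ ψ, σ => .imp (φ.subst σ) (ψ.subst σ)
  | .neg φ, σ => .neg (φ.subst σ)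
  | .ideq φ ψ, σ => .ideq (φ.subst σ) (ψ.subst σ)
  | .ref φ ψ, σ => .ref (φ.subst σ) (ψ.subst σ)
  | .teq s t, σ => .teq (s.subst σ) (t.subst σ)
  | .tle s t, σ => .tle (s.subst σ) (t.subst σ)
  | .isTrue φ, σ => .isTrue (φ.subst σ)
  | .isFalse φ, σ => .isFalse (φ.subst σ)
  | .box φ, σ => .box (φ.subst σ)
  | .just φ t, σ => .just (φ.subst σ) (t.subst σ)
  | .fAll x φ, σ =>
      let y := pForced σ (.fAll x φ)
      .fAll y (φ.subst (σ.updP x (.pvar y)))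
  | .jAll u φ, σ =>
      let v := jForced σ (.jAll u φ)
      .jAll v (φ.subst (σ.updJ u (.var v)))

/-- single-point substitution [x := ψ] for a propositional variable -/
def Fm.subst1P (φ : Fm) (x : ℕ) (ψ : Fm) : Fm := φ.subst (Subst.id.updP x ψ)

/-- single-point substitution [u := t] for a justification variable -/
def Fm.subst1J (φ : Fm) (u : ℕ) (t : Tm) : Fm := φ.subst (Subst.id.updJ u t)

/-- composition of substitutions: (σ ∘ τ)(x) = σ(x)[τ] -/
def Subst.comp (σ τ : Subst) : Subst :=
  ⟨fun x => (σ.pv x).subst τ, fun u => (σ.jv u).subst τ,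
   fun d => (σ.pc d).subst τ, fun c => (σ.jc c).subst τ⟩

/-- alpha-congruence: the smallest equivalence relation compatible with all
connectives and identifying formulas differing only in bound variables -/
inductive Alpha : Fm → Fm → Prop
  | refl (φ) : Alpha φ φ
  | symm : Alpha φ ψ → Alpha ψ φ
  | trans : Alpha φ ψ → Alpha ψ χ → Alpha φ χ
  | imp : Alpha φ₁ ψ₁ → Alpha φ₂ ψ₂ → Alpha (.imp φ₁ φ₂) (.imp ψ₁ ψ₂)
  | ideq : Alpha φ₁ ψ₁ → Alpha φ₂ ψ₂ → Alpha (.ideq φ₁ φ₂) (.ideq ψ₁ ψ₂)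
  | ref : Alpha φ₁ ψ₁ → Alpha φ₂ ψ₂ → Alpha (.ref φ₁ φ₂) (.ref ψ₁ ψ₂)
  | neg : Alpha φ ψ → Alpha (.neg φ) (.neg ψ)
  | isTrue : Alpha φ ψ → Alpha (.isTrue φ) (.isTrue ψ)
  | isFalse : Alpha φ ψ → Alpha (.isFalse φ) (.isFalse ψ)
  | box : Alpha φ ψ → Alpha (.box φ) (.box ψ)
  | just (t) : Alpha φ ψ → Alpha (.just φ t) (.just ψ t)
  | jAll : Alpha φ (ψ.subst1J v (.var u)) → (u ≠ v → u ∉ ψ.fvarJ) →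
      Alpha (.jAll u φ) (.jAll v ψ)
  | fAll : Alpha φ (ψ.subst1P y (.pvar x)) → (x ≠ y → x ∉ ψ.fvarP) →
      Alpha (.fAll x φ) (.fAll y ψ)

/-- syntactical reference φ ≺ ψ -/
def Sref (φ ψ : Fm) : Prop :=
  ∃ (x : ℕ) (ψ' : Fm), ψ' ≠ .pvar x ∧ x ∈ ψ'.fvarP ∧ Alpha (ψ'.subst1P x φ) ψ

/-! ## derived connectives -/

def Fm.and (φ ψ : Fm) : Fm := .neg (.imp φ (.neg ψ))
def Fm.iff (φ ψ : Fm) : Fm := (Fm.imp φ ψ).and (Fm.imp ψ φ)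
def Fm.jEx (u : ℕ) (φ : Fm) : Fm := .neg (.jAll u (.neg φ))
def Fm.fEx (x : ℕ) (φ : Fm) : Fm := .neg (.fAll x (.neg φ))

/-- conjunction of a list of formulas -/
def bigAnd : List Fm → Fm
  | [] => .imp (.pvar 0) (.pvar 0)
  | [φ] => φ
  | φ :: ψ :: rest => Fm.and φ (bigAnd (ψ :: rest))

/-- the formula σ ≡_φ σ' : conjunction of σ(x) ≡ σ'(x) over the free variables
of φ (in the order of the underlying well-orderings) -/
def eqOnF (σ σ' : Subst) (φ : Fm) : Fm :=
  bigAnd (((φ.fvarP.sort (· ≤ ·)).map fun x => Fm.ideq (σ.pv x) (σ'.pv x)) ++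
          ((φ.fvarJ.sort (· ≤ ·)).map fun u => Fm.teq (σ.jv u) (σ'.jv u)))

/-- the formula σ ≡_t σ' for a term t -/
def eqOnT (σ σ' : Subst) (t : Tm) : Fm :=
  bigAnd ((t.vars.sort (· ≤ ·)).map fun u => Fm.teq (σ.jv u) (σ'.jv u))

/-! ## the Hilbert system Ax -/

/-- boolean evaluation treating formulas other than →, ¬ as atoms -/
def Fm.evalB (v : Fm → Bool) : Fm → Bool
  | .imp φ ψ => !(φ.evalB v) || ψ.evalB v
  | .neg φ => !(φ.evalB v)
  | φ => v φ

/-- propositional tautology (a sufficient set of tautologies) -/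
def Taut (φ : Fm) : Prop := ∀ v : Fm → Bool, φ.evalB v = true

/-- the axiom system Ax of ∈_J-Logic (Definition 3.1) -/
inductive Ax : Fm → Prop
  | taut : Taut φ → Ax φ
  | tarski (φ) : Ax ((Fm.isTrue φ).iff φ)
  | falsity (φ) : Ax ((Fm.isFalse φ).iff (.neg φ))
  | appl (φ ψ s t) :
      Ax (.imp (.just (.imp φ ψ) s) (.imp (.just φ t) (.just ψ (.app s t))))
  | weak1 (φ s t) : Ax (.imp (.just φ s) (.just φ (.plus s t)))
  | weak2 (φ s t) : Ax (.imp (.just φ t) (.just φ (.plus s t)))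
  | necJust (φ u) : u ∉ φ.fvarJ →
      Ax ((Fm.box φ).iff (Fm.jEx u (.just φ (.var u))))
  | boxT (φ) : Ax (.imp (.box φ) φ)
  | refAx : Sref φ ψ → Ax (.ref φ ψ)
  | refTrans (φ ψ χ) : Ax (.imp (.ref φ ψ) (.imp (.ref ψ χ) (.ref φ χ)))
  | alphaAx : Alpha φ ψ → Ax (.ideq φ ψ)
  | eqImp (φ ψ) : Ax (.imp (.ideq φ ψ) (.imp φ ψ))
  | substP (σ σ' φ) : Ax (.imp (eqOnF σ σ' φ) (.ideq (φ.subst σ) (φ.subst σ')))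
  | jExInst (φ u t) : Ax (.imp (φ.subst1J u t) (Fm.jEx u φ))
  | jAllInst (φ u t) : Ax (.imp (.jAll u φ) (φ.subst1J u t))
  | jDistrib (φ ψ u) :
      Ax (.imp (.jAll u (.imp ψ φ)) (.imp (.jAll u ψ) (.jAll u φ)))
  | jVac (φ ψ u) : u ∉ ψ.fvarJ →
      Ax (.imp (.jAll u (.imp ψ φ)) (.imp ψ (.jAll u φ)))
  | pExInst (φ x ψ) : Ax (.imp (φ.subst1P x ψ) (Fm.fEx x φ))
  | pAllInst (φ x ψ) : Ax (.imp (.fAll x φ) (φ.subst1P x ψ))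
  | pDistrib (φ ψ x) :
      Ax (.imp (.fAll x (.imp ψ φ)) (.imp (.fAll x ψ) (.fAll x φ)))
  | pVac (φ ψ x) : x ∉ ψ.fvarP →
      Ax (.imp (.fAll x (.imp ψ φ)) (.imp ψ (.fAll x φ)))
  | leDef (s t x) :
      Ax ((Fm.tle s t).iff
        (.fAll x (.imp (.just (.pvar x) s) (.just (.pvar x) t))))
  | ext (s t) : Ax ((Fm.teq s t).iff ((Fm.tle s t).and (Fm.tle t s)))
  | substT (σ σ' t) : Ax (.imp (eqOnT σ σ' t) (.teq (t.subst σ) (t.subst σ')))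
  | genJ : Ax φ → u ∈ φ.fvarJ → Ax (.jAll u φ)
  | genP : Ax φ → x ∈ φ.fvarP → Ax (.fAll x φ)

/-- derivability from Φ in the Hilbert system Ax with Modus Ponens -/
inductive Deriv (Φ : Set Fm) : Fm → Prop
  | hyp : φ ∈ Φ → Deriv Φ φ
  | ax : Ax φ → Deriv Φ φ
  | mp : Deriv Φ (.imp φ ψ) → Deriv Φ φ → Deriv Φ ψ

def Consistent (Φ : Set Fm) : Prop := ¬ ∃ φ, Deriv Φ φ ∧ Deriv Φ (.neg φ)

def MaxConsistent (Φ : Set Fm) : Prop :=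
  Consistent Φ ∧ ∀ ψ, ψ ∉ Φ → ¬ Consistent (insert ψ Φ)

/-- Henkin set (Definition 4.4) -/
def Henkin (Φ : Set Fm) : Prop :=
  MaxConsistent Φ ∧
  (∀ u φ, Deriv Φ (.jAll u φ) ↔ ∀ c : ℕ, Deriv Φ (φ.subst1J u (.const c))) ∧
  (∀ x φ, Deriv Φ (.fAll x φ) ↔ ∀ d : ℕ, Deriv Φ (φ.subst1P x (.pconst d)))

/-! ## semantics -/

/-- an assignment of propositions to propositional variables and indexes to
justification variables -/
structure Assign (P I : Type) where
  gp : ℕ → P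
  gj : ℕ → I

def Assign.updP {P I : Type} (γ : Assign P I) (x : ℕ) (m : P) : Assign P I :=
  ⟨Function.update γ.gp x m, γ.gj⟩

def Assign.updJ {P I : Type} (γ : Assign P I) (u : ℕ) (l : I) : Assign P I :=
  ⟨γ.gp, Function.update γ.gj u l⟩

/-- a model of ∈_J-Logic (Definition 4.1) -/
structure JModel where
  P : Type                                  -- the propositional universe M
  I : Type                                  -- the set L of indexes
  TRUE : Set P
  FALSE : Set P
  NEC : Set P
  REASON : I → Set P
  ref : P → P → Prop                        -- the reference relation <^M
  plusI : I → I → I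
  dotI : I → I → I
  leI : I → I → Prop
  G : Fm → Assign P I → P                   -- Gamma-function on formulas
  GT : Tm → Assign P I → I                  -- Gamma-function on terms
  cover : TRUE ∪ FALSE = Set.univ
  disj : TRUE ∩ FALSE = ∅
  nec_sub : NEC ⊆ TRUE
  nec_union : NEC = ⋃ l, REASON l
  le_iso : ∀ l k, leI l k ↔ REASON l ⊆ REASON k
  reason_inj : Function.Injective REASON
  ref_trans : Transitive ref
  -- structure conditions
  ep : ∀ x γ, G (.pvar x) γ = γ.gp x
  epT : ∀ u γ, GT (.var u) γ = γ.gj u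
  cp : ∀ φ γ γ', (∀ x ∈ Fm.fvarP φ, γ.gp x = Assign.gp γ' x) →
      (∀ u ∈ Fm.fvarJ φ, γ.gj u = Assign.gj γ' u) → G φ γ = G φ γ'
  cpT : ∀ t γ γ', (∀ u ∈ Tm.vars t, γ.gj u = Assign.gj γ' u) → GT t γ = GT t γ'
  sp : ∀ φ (σ : Subst) γ, σ.IdOnConsts →
      G (φ.subst σ) γ = G φ ⟨fun x => G (σ.pv x) γ, fun u => GT (σ.jv u) γ⟩
  spT : ∀ t (σ : Subst) γ, σ.IdOnConsts →
      GT (t.subst σ) γ = GT t ⟨fun x => G (σ.pv x) γ, fun u => GT (σ.jv u) γ⟩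
  rp : ∀ φ ψ γ, Sref φ ψ → ref (G φ γ) (G ψ γ)
  hp_plus : ∀ s t γ, GT (.plus s t) γ = plusI (GT s γ) (GT t γ)
  hp_dot : ∀ s t γ, GT (.app s t) γ = dotI (GT s γ) (GT t γ)
  -- truth conditions
  t_imp : ∀ φ ψ γ, (G (.imp φ ψ) γ ∈ TRUE ↔ (G φ γ ∈ FALSE ∨ G ψ γ ∈ TRUE))
  t_neg : ∀ φ γ, (G (.neg φ) γ ∈ TRUE ↔ G φ γ ∉ TRUE)
  t_true : ∀ φ γ, (G (.isTrue φ) γ ∈ TRUE ↔ G φ γ ∈ TRUE)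
  t_false : ∀ φ γ, (G (.isFalse φ) γ ∈ TRUE ↔ G φ γ ∈ FALSE)
  t_ideq : ∀ φ ψ γ, (G (.ideq φ ψ) γ ∈ TRUE ↔ G φ γ = G ψ γ)
  t_ref : ∀ φ ψ γ, (G (.ref φ ψ) γ ∈ TRUE ↔ ref (G φ γ) (G ψ γ))
  t_teq : ∀ s t γ, (G (.teq s t) γ ∈ TRUE ↔ GT s γ = GT t γ)
  t_tle : ∀ s t γ, (G (.tle s t) γ ∈ TRUE ↔ leI (GT s γ) (GT t γ))
  t_box : ∀ φ γ, (G (.box φ) γ ∈ TRUE ↔ G φ γ ∈ NEC)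
  t_just : ∀ φ t γ, (G (.just φ t) γ ∈ TRUE ↔ G φ γ ∈ REASON (GT t γ))
  t_app : ∀ φ ψ s t γ, G (.imp φ ψ) γ ∈ REASON (GT s γ) →
      G φ γ ∈ REASON (GT t γ) → G ψ γ ∈ REASON (GT (.app s t) γ)
  t_plusJ : ∀ φ s t γ, G φ γ ∈ REASON (GT s γ) ∪ REASON (GT t γ) →
      G φ γ ∈ REASON (GT (.plus s t) γ)
  t_jAll : ∀ u φ γ, (G (.jAll u φ) γ ∈ TRUE ↔ ∀ l, G φ (γ.updJ u l) ∈ TRUE)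
  t_fAll : ∀ x φ γ, (G (.fAll x φ) γ ∈ TRUE ↔ ∀ m, G φ (γ.updP x m) ∈ TRUE)

/-- satisfaction -/
def JModel.Sat (M : JModel) (γ : Assign M.P M.I) (φ : Fm) : Prop :=
  M.G φ γ ∈ M.TRUE

/-- logical consequence over all models -/
def Conseq (Φ : Set Fm) (φ : Fm) : Prop :=
  ∀ (M : JModel) (γ : Assign M.P M.I), (∀ ψ ∈ Φ, M.Sat γ ψ) → M.Sat γ φ

/-! ## S4 extensions -/

/-- the axioms of Ax + (4) -/
inductive Ax4 : Fm → Prop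
  | base : Ax φ → Ax4 φ
  | four (φ) : Ax4 (.imp (.box φ) (.box (.box φ)))

/-- derivability in Ax + (4) + (AxNec): MP plus Axiom Necessitation -/
inductive Deriv4 (Φ : Set Fm) : Fm → Prop
  | hyp : φ ∈ Φ → Deriv4 Φ φ
  | ax : Ax4 φ → Deriv4 Φ φ
  | axnec : Ax4 φ → Deriv4 Φ (.box φ)
  | mp : Deriv4 Φ (.imp φ ψ) → Deriv4 Φ φ → Deriv4 Φ ψ

/-- truth condition (4) -/
def Cond4 (M : JModel) : Prop :=
  ∀ φ γ, M.Sat γ (.box φ) → M.Sat γ (.box (.box φ))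

/-- truth condition (AxNec) -/
def CondAxNec (M : JModel) : Prop :=
  ∀ φ γ, Ax4 φ → M.Sat γ (.box φ)

/-! ## basic modal language and S4 -/

inductive MFm : Type
  | var : ℕ → MFm
  | imp : MFm → MFm → MFm
  | neg : MFm → MFm
  | box : MFm → MFm
  deriving DecidableEq

def MFm.toFm : MFm → Fm
  | .var x => .pvar x
  | .imp a b => .imp a.toFm b.toFm
  | .neg a => .neg a.toFm
  | .box a => .box a.toFm

def MFm.evalB (v : MFm → Bool) : MFm → Bool
  | .imp a b => !(a.evalB v) || b.evalB v
  | .neg a => !(a.evalB v)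
  | a => v a

def MTaut (a : MFm) : Prop := ∀ v, a.evalB v = true

/-- the modal logic S4 -/
inductive S4 : MFm → Prop
  | taut : MTaut a → S4 a
  | axK (a b) : S4 (.imp (.box (.imp a b)) (.imp (.box a) (.box b)))
  | axT (a) : S4 (.imp (.box a) a)
  | ax4 (a) : S4 (.imp (.box a) (.box (.box a)))
  | mp : S4 (.imp a b) → S4 a → S4 b
  | nec : S4 a → S4 (.box a)

/-- an S4 frame: reflexive and transitive accessibility -/
structure S4Frame where
  W : Type
  R : W → W → Prop
  refl : Reflexive R
  trans : Transitive R

/-- Kripke satisfaction -/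
def KSat (F : S4Frame) (g : F.W → ℕ → Prop) : F.W → MFm → Prop
  | w, .var x => g w x
  | w, .imp a b => KSat F g w a → KSat F g w b
  | w, .neg a => ¬ KSat F g w a
  | w, .box a => ∀ w', F.R w w' → KSat F g w' a

end EJ
namespace EJ
open Finset

/-! ### term substitution lemmas -/

theorem Tm.subst_ext {t : Tm} {σ τ : Subst} (h1 : ∀ u ∈ t.vars, σ.jv u = τ.jv u)
    (h2 : ∀ c ∈ t.consts, σ.jc c = τ.jc c) : t.subst σ = t.subst τ := by
  induction t with
  | var u => exact h1 u (by simp [Tm.vars])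
  | const c => exact h2 c (by simp [Tm.consts])
  | app s t ihs iht =>
      simp only [Tm.subst]
      rw [ihs (fun u hu => h1 u (by simp [Tm.vars, hu])) (fun c hc => h2 c (by simp [Tm.consts, hc])),
          iht (fun u hu => h1 u (by simp [Tm.vars, hu])) (fun c hc => h2 c (by simp [Tm.consts, hc]))]
  | plus s t ihs iht =>
      simp only [Tm.subst]
      rw [ihs (fun u hu => h1 u (by simp [Tm.vars, hu])) (fun c hc => h2 c (by simp [Tm.consts, hc])),
          iht (fun u hu => h1 u (by simp [Tm.vars, hu])) (fun c hc => h2 c (by simp [Tm.consts, hc]))]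

theorem Tm.subst_congr {t : Tm} {σ τ : Subst} (h1 : σ.jv = τ.jv) (h2 : σ.jc = τ.jc) :
    t.subst σ = t.subst τ :=
  Tm.subst_ext (fun u _ => congrFun h1 u) (fun c _ => congrFun h2 c)

theorem Tm.subst_id (t : Tm) : t.subst Subst.id = t := by
  induction t <;> simp_all [Tm.subst, Subst.id]

theorem Tm.subst_comp (t : Tm) (σ τ : Subst) :
    (t.subst σ).subst τ = t.subst (σ.comp τ) := by
  induction t <;> simp_all [Tm.subst, Subst.comp]

theorem Tm.vars_subst (t : Tm) (σ : Subst) :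
    (t.subst σ).vars = t.vars.biUnion (fun u => (σ.jv u).vars) ∪
      t.consts.biUnion (fun c => (σ.jc c).vars) := by
  induction t with
  | var u => simp [Tm.subst, Tm.vars, Tm.consts]
  | const c => simp [Tm.subst, Tm.vars, Tm.consts]
  | app s t ihs iht =>
      simp only [Tm.subst, Tm.vars, Tm.consts, ihs, iht]
      ext a; simp; aesop
  | plus s t ihs iht =>
      simp only [Tm.subst, Tm.vars, Tm.consts, ihs, iht]
      ext a; simp; aesop

theorem Tm.consts_subst (t : Tm) (σ : Subst) :
    (t.subst σ).consts = t.vars.biUnion (fun u => (σ.jv u).consts) ∪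
      t.consts.biUnion (fun c => (σ.jc c).consts) := by
  induction t with
  | var u => simp [Tm.subst, Tm.vars, Tm.consts]
  | const c => simp [Tm.subst, Tm.vars, Tm.consts]
  | app s t ihs iht =>
      simp only [Tm.subst, Tm.vars, Tm.consts, ihs, iht]
      ext a; simp; aesop
  | plus s t ihs iht =>
      simp only [Tm.subst, Tm.vars, Tm.consts, ihs, iht]
      ext a; simp; aesop

/-! ### data of a substitution on a formula -/

/-- free propositional variables contributed by σ on φ -/
def pD (σ : Subst) (φ : Fm) : Finset ℕ :=
  φ.fvarP.biUnion (fun w => (σ.pv w).fvarP) ∪ φ.pconsts.biUnion (fun w => (σ.pc w).fvarP)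

def jD (σ : Subst) (φ : Fm) : Finset ℕ :=
  ((φ.fvarP.biUnion fun w => (σ.pv w).fvarJ) ∪
   (φ.pconsts.biUnion fun w => (σ.pc w).fvarJ) ∪
   (φ.fvarJ.biUnion fun w => (σ.jv w).vars) ∪
   (φ.jconsts.biUnion fun w => (σ.jc w).vars))

def pcD (σ : Subst) (φ : Fm) : Finset ℕ :=
  φ.fvarP.biUnion (fun w => (σ.pv w).pconsts) ∪ φ.pconsts.biUnion (fun w => (σ.pc w).pconsts)

def jcD (σ : Subst) (φ : Fm) : Finset ℕ :=
  ((φ.fvarP.biUnion fun w => (σ.pv w).jconsts) ∪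
   (φ.pconsts.biUnion fun w => (σ.pc w).jconsts) ∪
   (φ.fvarJ.biUnion fun w => (σ.jv w).consts) ∪
   (φ.jconsts.biUnion fun w => (σ.jc w).consts))

theorem pForced_eq (σ : Subst) (φ : Fm) : pForced σ φ = (pD σ φ).sup Nat.succ := rfl
theorem jForced_eq (σ : Subst) (φ : Fm) : jForced σ φ = (jD σ φ).sup Nat.succ := rfl

theorem lt_sup_succ {S : Finset ℕ} {a : ℕ} (h : a ∈ S) : a < S.sup Nat.succ :=
  Nat.lt_of_succ_le (Finset.le_sup (f := Nat.succ) h)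

theorem lt_pForced {σ : Subst} {φ : Fm} {a : ℕ} (h : a ∈ pD σ φ) : a < pForced σ φ :=
  lt_sup_succ h

theorem lt_jForced {σ : Subst} {φ : Fm} {a : ℕ} (h : a ∈ jD σ φ) : a < jForced σ φ :=
  lt_sup_succ h

theorem mem_pD {σ : Subst} {φ : Fm} {a : ℕ} :
    a ∈ pD σ φ ↔ (∃ w ∈ φ.fvarP, a ∈ (σ.pv w).fvarP) ∨ ∃ d ∈ φ.pconsts, a ∈ (σ.pc d).fvarP := by
  simp [pD]

theorem mem_jD {σ : Subst} {φ : Fm} {a : ℕ} :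
    a ∈ jD σ φ ↔ ((∃ w ∈ φ.fvarP, a ∈ (σ.pv w).fvarJ) ∨ ∃ d ∈ φ.pconsts, a ∈ (σ.pc d).fvarJ) ∨
      (∃ u ∈ φ.fvarJ, a ∈ (σ.jv u).vars) ∨ ∃ c ∈ φ.jconsts, a ∈ (σ.jc c).vars := by
  simp only [jD, Finset.mem_union, Finset.mem_biUnion]; aesop

/-! ### free symbols of a substituted formula -/

theorem biUnion_union (S T : Finset ℕ) (f : ℕ → Finset ℕ) :
    (S ∪ T).biUnion f = S.biUnion f ∪ T.biUnion f := by
  ext a; simp [Finset.mem_union, Finset.mem_biUnion, or_and_right, exists_or]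

theorem erase_eq_helper {A B : Finset ℕ} {y : ℕ} (h1 : ∀ a ∈ A, a ∈ B ∨ a = y)
    (h2 : B ⊆ A) (h3 : y ∉ B) : A.erase y = B := by
  ext a; simp only [Finset.mem_erase]
  constructor
  · rintro ⟨hne, ha⟩
    rcases h1 a ha with h | h
    · exact h
    · exact absurd h hne
  · intro hb; exact ⟨fun he => h3 (he ▸ hb), h2 hb⟩

theorem Fm.fvarP_subst (φ : Fm) (σ : Subst) : (φ.subst σ).fvarP = pD σ φ := by
  induction φ generalizing σ with
  | pvar x => simp [Fm.subst, pD, Fm.fvarP, Fm.pconsts]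
  | pconst d => simp [Fm.subst, pD, Fm.fvarP, Fm.pconsts]
  | imp φ ψ ih1 ih2 =>
      simp only [Fm.subst, Fm.fvarP, Fm.pconsts, ih1, ih2, pD, jD, pcD, jcD, Fm.fvarP, Fm.fvarJ, Fm.pconsts, Fm.jconsts, biUnion_union, Tm.vars_subst, Tm.consts_subst]
      ext a; simp only [Finset.mem_union]; tauto
  | ideq φ ψ ih1 ih2 =>
      simp only [Fm.subst, Fm.fvarP, Fm.pconsts, ih1, ih2, pD, jD, pcD, jcD, Fm.fvarP, Fm.fvarJ, Fm.pconsts, Fm.jconsts, biUnion_union, Tm.vars_subst, Tm.consts_subst]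
      ext a; simp only [Finset.mem_union]; tauto
  | ref φ ψ ih1 ih2 =>
      simp only [Fm.subst, Fm.fvarP, Fm.pconsts, ih1, ih2, pD, jD, pcD, jcD, Fm.fvarP, Fm.fvarJ, Fm.pconsts, Fm.jconsts, biUnion_union, Tm.vars_subst, Tm.consts_subst]
      ext a; simp only [Finset.mem_union]; tauto
  | neg φ ih => simp only [Fm.subst, Fm.fvarP, ih]; ext a; simp [mem_pD, Fm.fvarP, Fm.pconsts]
  | isTrue φ ih => simp only [Fm.subst, Fm.fvarP, ih]; ext a; simp [mem_pD, Fm.fvarP, Fm.pconsts]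
  | isFalse φ ih => simp only [Fm.subst, Fm.fvarP, ih]; ext a; simp [mem_pD, Fm.fvarP, Fm.pconsts]
  | box φ ih => simp only [Fm.subst, Fm.fvarP, ih]; ext a; simp [mem_pD, Fm.fvarP, Fm.pconsts]
  | just φ t ih => simp only [Fm.subst, Fm.fvarP, ih]; ext a; simp [mem_pD, Fm.fvarP, Fm.pconsts]
  | teq s t => simp [Fm.subst, Fm.fvarP, pD, Fm.pconsts]
  | tle s t => simp [Fm.subst, Fm.fvarP, pD, Fm.pconsts]
  | fAll x φ ih =>
      simp only [Fm.subst, Fm.fvarP, ih]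
      ext a
      simp only [Finset.mem_erase, mem_pD, Subst.updP, Function.update_apply, Fm.fvarP, Fm.pconsts]
      constructor
      · rintro ⟨hne, h⟩
        rcases h with ⟨w, hw, hmem⟩ | ⟨d, hd, hmem⟩
        · by_cases hwx : w = x
          · simp [hwx] at hmem
            simp [Fm.fvarP] at hmem
            exact absurd hmem hne
          · simp [hwx] at hmem
            exact Or.inl ⟨w, ⟨hwx, hw⟩, hmem⟩
        · exact Or.inr ⟨d, hd, hmem⟩
      · rintro (⟨w, ⟨hwx, hw⟩, hmem⟩ | ⟨d, hd, hmem⟩)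
        · have hane : a ≠ pForced σ (.fAll x φ) := by
            intro h; subst h
            exact absurd (lt_pForced (mem_pD.2 (Or.inl ⟨w, by simp [Fm.fvarP, Finset.mem_erase, hwx, hw], hmem⟩))) (lt_irrefl _)
          exact ⟨hane, Or.inl ⟨w, hw, by simp [hwx, hmem]⟩⟩
        · have hane : a ≠ pForced σ (.fAll x φ) := by
            intro h; subst h
            exact absurd (lt_pForced (mem_pD.2 (Or.inr ⟨d, by simp [Fm.pconsts, hd], hmem⟩))) (lt_irrefl _)
          exact ⟨hane, Or.inr ⟨d, hd, hmem⟩⟩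
  | jAll u φ ih =>
      simp only [Fm.subst, Fm.fvarP, ih]
      ext a
      simp [mem_pD, Subst.updJ, Fm.fvarP, Fm.pconsts]

theorem biUnion_erase_of_empty {S : Finset ℕ} {f g : ℕ → Finset ℕ} {x : ℕ}
    (h1 : f x = ∅) (h2 : ∀ w ∈ S, w ≠ x → f w = g w) :
    S.biUnion f = (S.erase x).biUnion g := by
  ext a
  simp only [Finset.mem_biUnion, Finset.mem_erase]
  constructor
  · rintro ⟨w, hw, ha⟩
    by_cases hwx : w = x
    · subst hwx; rw [h1] at ha; exact absurd ha (Finset.notMem_empty a)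
    · exact ⟨w, ⟨hwx, hw⟩, (h2 w hw hwx) ▸ ha⟩
  · rintro ⟨w, ⟨hwx, hw⟩, ha⟩
    exact ⟨w, hw, (h2 w hw hwx) ▸ ha⟩

theorem Fm.fvarJ_subst (φ : Fm) (σ : Subst) : (φ.subst σ).fvarJ = jD σ φ := by
  induction φ generalizing σ with
  | pvar x => simp [Fm.subst, jD, Fm.fvarP, Fm.fvarJ, Fm.pconsts, Fm.jconsts]
  | pconst d => simp [Fm.subst, jD, Fm.fvarP, Fm.fvarJ, Fm.pconsts, Fm.jconsts]
  | imp φ ψ ih1 ih2 =>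
      simp only [Fm.subst, Fm.fvarJ, ih1, ih2, pD, jD, pcD, jcD, Fm.fvarP, Fm.fvarJ, Fm.pconsts, Fm.jconsts, biUnion_union, Tm.vars_subst, Tm.consts_subst]
      ext a; simp only [Finset.mem_union]; tauto
  | ideq φ ψ ih1 ih2 =>
      simp only [Fm.subst, Fm.fvarJ, ih1, ih2, pD, jD, pcD, jcD, Fm.fvarP, Fm.fvarJ, Fm.pconsts, Fm.jconsts, biUnion_union, Tm.vars_subst, Tm.consts_subst]
      ext a; simp only [Finset.mem_union]; tauto
  | ref φ ψ ih1 ih2 =>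
      simp only [Fm.subst, Fm.fvarJ, ih1, ih2, pD, jD, pcD, jcD, Fm.fvarP, Fm.fvarJ, Fm.pconsts, Fm.jconsts, biUnion_union, Tm.vars_subst, Tm.consts_subst]
      ext a; simp only [Finset.mem_union]; tauto
  | neg φ ih => simp only [Fm.subst, Fm.fvarJ, ih]; ext a; simp [mem_jD, Fm.fvarP, Fm.fvarJ, Fm.pconsts, Fm.jconsts]
  | isTrue φ ih => simp only [Fm.subst, Fm.fvarJ, ih]; ext a; simp [mem_jD, Fm.fvarP, Fm.fvarJ, Fm.pconsts, Fm.jconsts]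
  | isFalse φ ih => simp only [Fm.subst, Fm.fvarJ, ih]; ext a; simp [mem_jD, Fm.fvarP, Fm.fvarJ, Fm.pconsts, Fm.jconsts]
  | box φ ih => simp only [Fm.subst, Fm.fvarJ, ih]; ext a; simp [mem_jD, Fm.fvarP, Fm.fvarJ, Fm.pconsts, Fm.jconsts]
  | just φ t ih =>
      simp only [Fm.subst, Fm.fvarJ, ih, Tm.vars_subst, pD, jD, pcD, jcD, Fm.fvarP, Fm.fvarJ, Fm.pconsts, Fm.jconsts, biUnion_union, Tm.vars_subst, Tm.consts_subst]
      ext a; simp only [Finset.mem_union]; tauto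
  | teq s t =>
      simp only [Fm.subst, Fm.fvarJ, Tm.vars_subst, pD, jD, pcD, jcD, Fm.fvarP, Fm.fvarJ, Fm.pconsts, Fm.jconsts, biUnion_union, Tm.vars_subst, Tm.consts_subst]
      ext a; simp only [Finset.mem_union]; tauto
  | tle s t =>
      simp only [Fm.subst, Fm.fvarJ, Tm.vars_subst, pD, jD, pcD, jcD, Fm.fvarP, Fm.fvarJ, Fm.pconsts, Fm.jconsts, biUnion_union, Tm.vars_subst, Tm.consts_subst]
      ext a; simp only [Finset.mem_union]; tauto
  | fAll x φ ih =>
      simp only [Fm.subst, Fm.fvarJ, ih]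
      unfold jD
      rw [biUnion_erase_of_empty (x := x) (g := fun w => (σ.pv w).fvarJ)
        (by simp [Subst.updP, Fm.fvarJ])
        (fun w _ hwx => by simp [Subst.updP, Function.update_apply, hwx])]
      simp [Subst.updP, Fm.fvarP, Fm.fvarJ, Fm.pconsts, Fm.jconsts]
  | jAll u φ ih =>
      simp only [Fm.subst, Fm.fvarJ, ih]
      apply erase_eq_helper
      · intro a ha
        rcases mem_jD.1 ha with (h | h) | ⟨w, hw, hmem⟩ | h
        · exact Or.inl (mem_jD.2 (Or.inl (Or.inl (by simpa [Subst.updJ, Fm.fvarP] using h))))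
        · exact Or.inl (mem_jD.2 (Or.inl (Or.inr (by simpa [Subst.updJ, Fm.pconsts] using h))))
        · by_cases hwu : w = u
          · right; simpa [Subst.updJ, hwu, Tm.vars] using hmem
          · exact Or.inl (mem_jD.2 (Or.inr (Or.inl ⟨w,
              by simp [Fm.fvarJ, Finset.mem_erase, hwu, hw],
              by simpa [Subst.updJ, Function.update_apply, hwu] using hmem⟩)))
        · exact Or.inl (mem_jD.2 (Or.inr (Or.inr (by simpa [Subst.updJ, Fm.jconsts] using h))))
      · intro a ha
        rcases mem_jD.1 ha with (h | h) | ⟨w, hw, hmem⟩ | h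
        · exact mem_jD.2 (Or.inl (Or.inl (by simpa [Subst.updJ, Fm.fvarP] using h)))
        · exact mem_jD.2 (Or.inl (Or.inr (by simpa [Subst.updJ, Fm.pconsts] using h)))
        · rw [Fm.fvarJ, Finset.mem_erase] at hw
          exact mem_jD.2 (Or.inr (Or.inl ⟨w, hw.2,
            by simp [Subst.updJ, Function.update_apply, hw.1, hmem]⟩))
        · exact mem_jD.2 (Or.inr (Or.inr (by simpa [Subst.updJ, Fm.jconsts] using h)))
      · exact fun h => absurd (lt_jForced h) (lt_irrefl _)

theorem Fm.pconsts_subst (φ : Fm) (σ : Subst) : (φ.subst σ).pconsts = pcD σ φ := by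
  induction φ generalizing σ with
  | pvar x => simp [Fm.subst, pcD, Fm.fvarP, Fm.pconsts]
  | pconst d => simp [Fm.subst, pcD, Fm.fvarP, Fm.pconsts]
  | imp φ ψ ih1 ih2 =>
      simp only [Fm.subst, Fm.pconsts, ih1, ih2, pD, jD, pcD, jcD, Fm.fvarP, Fm.fvarJ, Fm.pconsts, Fm.jconsts, biUnion_union, Tm.vars_subst, Tm.consts_subst]
      ext a; simp only [Finset.mem_union]; tauto
  | ideq φ ψ ih1 ih2 =>
      simp only [Fm.subst, Fm.pconsts, ih1, ih2, pD, jD, pcD, jcD, Fm.fvarP, Fm.fvarJ, Fm.pconsts, Fm.jconsts, biUnion_union, Tm.vars_subst, Tm.consts_subst]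
      ext a; simp only [Finset.mem_union]; tauto
  | ref φ ψ ih1 ih2 =>
      simp only [Fm.subst, Fm.pconsts, ih1, ih2, pD, jD, pcD, jcD, Fm.fvarP, Fm.fvarJ, Fm.pconsts, Fm.jconsts, biUnion_union, Tm.vars_subst, Tm.consts_subst]
      ext a; simp only [Finset.mem_union]; tauto
  | neg φ ih => simp only [Fm.subst, Fm.pconsts, ih]; ext a; simp [pcD, Fm.fvarP, Fm.pconsts]
  | isTrue φ ih => simp only [Fm.subst, Fm.pconsts, ih]; ext a; simp [pcD, Fm.fvarP, Fm.pconsts]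
  | isFalse φ ih => simp only [Fm.subst, Fm.pconsts, ih]; ext a; simp [pcD, Fm.fvarP, Fm.pconsts]
  | box φ ih => simp only [Fm.subst, Fm.pconsts, ih]; ext a; simp [pcD, Fm.fvarP, Fm.pconsts]
  | just φ t ih => simp only [Fm.subst, Fm.pconsts, ih]; ext a; simp [pcD, Fm.fvarP, Fm.pconsts]
  | teq s t => simp [Fm.subst, Fm.pconsts, pcD, Fm.fvarP]
  | tle s t => simp [Fm.subst, Fm.pconsts, pcD, Fm.fvarP]
  | fAll x φ ih =>
      simp only [Fm.subst, Fm.pconsts, ih]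
      unfold pcD
      rw [biUnion_erase_of_empty (x := x)
        (g := fun w => (σ.pv w).pconsts) (by simp [Subst.updP, Fm.pconsts])
        (fun w _ hwx => by simp [Subst.updP, Function.update_apply, hwx])]
      simp [Subst.updP, Fm.fvarP, Fm.pconsts]
  | jAll u φ ih =>
      simp only [Fm.subst, Fm.pconsts, ih]
      simp [pcD, Subst.updJ, Fm.fvarP, Fm.pconsts]

theorem Fm.jconsts_subst (φ : Fm) (σ : Subst) : (φ.subst σ).jconsts = jcD σ φ := by
  induction φ generalizing σ with
  | pvar x => simp [Fm.subst, jcD, Fm.fvarP, Fm.fvarJ, Fm.pconsts, Fm.jconsts]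
  | pconst d => simp [Fm.subst, jcD, Fm.fvarP, Fm.fvarJ, Fm.pconsts, Fm.jconsts]
  | imp φ ψ ih1 ih2 =>
      simp only [Fm.subst, Fm.jconsts, ih1, ih2, pD, jD, pcD, jcD, Fm.fvarP, Fm.fvarJ, Fm.pconsts, Fm.jconsts, biUnion_union, Tm.vars_subst, Tm.consts_subst]
      ext a; simp only [Finset.mem_union]; tauto
  | ideq φ ψ ih1 ih2 =>
      simp only [Fm.subst, Fm.jconsts, ih1, ih2, pD, jD, pcD, jcD, Fm.fvarP, Fm.fvarJ, Fm.pconsts, Fm.jconsts, biUnion_union, Tm.vars_subst, Tm.consts_subst]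
      ext a; simp only [Finset.mem_union]; tauto
  | ref φ ψ ih1 ih2 =>
      simp only [Fm.subst, Fm.jconsts, ih1, ih2, pD, jD, pcD, jcD, Fm.fvarP, Fm.fvarJ, Fm.pconsts, Fm.jconsts, biUnion_union, Tm.vars_subst, Tm.consts_subst]
      ext a; simp only [Finset.mem_union]; tauto
  | neg φ ih => simp only [Fm.subst, Fm.jconsts, ih]; ext a; simp [jcD, Fm.fvarP, Fm.fvarJ, Fm.pconsts, Fm.jconsts]
  | isTrue φ ih => simp only [Fm.subst, Fm.jconsts, ih]; ext a; simp [jcD, Fm.fvarP, Fm.fvarJ, Fm.pconsts, Fm.jconsts]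
  | isFalse φ ih => simp only [Fm.subst, Fm.jconsts, ih]; ext a; simp [jcD, Fm.fvarP, Fm.fvarJ, Fm.pconsts, Fm.jconsts]
  | box φ ih => simp only [Fm.subst, Fm.jconsts, ih]; ext a; simp [jcD, Fm.fvarP, Fm.fvarJ, Fm.pconsts, Fm.jconsts]
  | just φ t ih =>
      simp only [Fm.subst, Fm.jconsts, ih, Tm.consts_subst, pD, jD, pcD, jcD, Fm.fvarP, Fm.fvarJ, Fm.pconsts, Fm.jconsts, biUnion_union, Tm.vars_subst, Tm.consts_subst]
      ext a; simp only [Finset.mem_union]; tauto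
  | teq s t =>
      simp only [Fm.subst, Fm.jconsts, Tm.consts_subst, pD, jD, pcD, jcD, Fm.fvarP, Fm.fvarJ, Fm.pconsts, Fm.jconsts, biUnion_union, Tm.vars_subst, Tm.consts_subst]
      ext a; simp only [Finset.mem_union]; tauto
  | tle s t =>
      simp only [Fm.subst, Fm.jconsts, Tm.consts_subst, pD, jD, pcD, jcD, Fm.fvarP, Fm.fvarJ, Fm.pconsts, Fm.jconsts, biUnion_union, Tm.vars_subst, Tm.consts_subst]
      ext a; simp only [Finset.mem_union]; tauto
  | fAll x φ ih =>
      simp only [Fm.subst, Fm.jconsts, ih]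
      unfold jcD
      rw [biUnion_erase_of_empty (x := x)
        (g := fun w => (σ.pv w).jconsts) (by simp [Subst.updP, Fm.jconsts])
        (fun w _ hwx => by simp [Subst.updP, Function.update_apply, hwx])]
      simp [Subst.updP, Fm.fvarP, Fm.fvarJ, Fm.pconsts, Fm.jconsts]
  | jAll u φ ih =>
      simp only [Fm.subst, Fm.jconsts, ih]
      unfold jcD
      rw [biUnion_erase_of_empty (x := u) (S := φ.fvarJ)
        (g := fun w => (σ.jv w).consts) (by simp [Subst.updJ, Tm.consts])
        (fun w _ hwu => by simp [Subst.updJ, Function.update_apply, hwu])]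
      simp [Subst.updJ, Fm.fvarP, Fm.fvarJ, Fm.pconsts, Fm.jconsts]


theorem mem_pcD {σ : Subst} {φ : Fm} {a : ℕ} :
    a ∈ pcD σ φ ↔ (∃ w ∈ φ.fvarP, a ∈ (σ.pv w).pconsts) ∨ ∃ d ∈ φ.pconsts, a ∈ (σ.pc d).pconsts := by
  simp [pcD]

theorem mem_jcD {σ : Subst} {φ : Fm} {a : ℕ} :
    a ∈ jcD σ φ ↔ ((∃ w ∈ φ.fvarP, a ∈ (σ.pv w).jconsts) ∨ ∃ d ∈ φ.pconsts, a ∈ (σ.pc d).jconsts) ∨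
      (∃ u ∈ φ.fvarJ, a ∈ (σ.jv u).consts) ∨ ∃ c ∈ φ.jconsts, a ∈ (σ.jc c).consts := by
  simp only [jcD, Finset.mem_union, Finset.mem_biUnion]; aesop

/-! ### extensionality of substitution -/

theorem Fm.subst_ext : ∀ (φ : Fm) (σ τ : Subst),
    (∀ w ∈ φ.fvarP, σ.pv w = τ.pv w) → (∀ u ∈ φ.fvarJ, σ.jv u = τ.jv u) →
    (∀ d ∈ φ.pconsts, σ.pc d = τ.pc d) → (∀ c ∈ φ.jconsts, σ.jc c = τ.jc c) →
    φ.subst σ = φ.subst τ := by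
  intro φ
  induction φ with
  | pvar x => intro σ τ hpv _ _ _; exact hpv x (by simp [Fm.fvarP])
  | pconst d => intro σ τ _ _ hpc _; exact hpc d (by simp [Fm.pconsts])
  | imp φ ψ ih1 ih2 =>
      intro σ τ hpv hjv hpc hjc
      simp only [Fm.subst]
      rw [ih1 σ τ (fun w hw => hpv w (by simp [Fm.fvarP, hw])) (fun w hw => hjv w (by simp [Fm.fvarJ, hw]))
            (fun w hw => hpc w (by simp [Fm.pconsts, hw])) (fun w hw => hjc w (by simp [Fm.jconsts, hw])),
          ih2 σ τ (fun w hw => hpv w (by simp [Fm.fvarP, hw])) (fun w hw => hjv w (by simp [Fm.fvarJ, hw]))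
            (fun w hw => hpc w (by simp [Fm.pconsts, hw])) (fun w hw => hjc w (by simp [Fm.jconsts, hw]))]
  | ideq φ ψ ih1 ih2 =>
      intro σ τ hpv hjv hpc hjc
      simp only [Fm.subst]
      rw [ih1 σ τ (fun w hw => hpv w (by simp [Fm.fvarP, hw])) (fun w hw => hjv w (by simp [Fm.fvarJ, hw]))
            (fun w hw => hpc w (by simp [Fm.pconsts, hw])) (fun w hw => hjc w (by simp [Fm.jconsts, hw])),
          ih2 σ τ (fun w hw => hpv w (by simp [Fm.fvarP, hw])) (fun w hw => hjv w (by simp [Fm.fvarJ, hw]))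
            (fun w hw => hpc w (by simp [Fm.pconsts, hw])) (fun w hw => hjc w (by simp [Fm.jconsts, hw]))]
  | ref φ ψ ih1 ih2 =>
      intro σ τ hpv hjv hpc hjc
      simp only [Fm.subst]
      rw [ih1 σ τ (fun w hw => hpv w (by simp [Fm.fvarP, hw])) (fun w hw => hjv w (by simp [Fm.fvarJ, hw]))
            (fun w hw => hpc w (by simp [Fm.pconsts, hw])) (fun w hw => hjc w (by simp [Fm.jconsts, hw])),
          ih2 σ τ (fun w hw => hpv w (by simp [Fm.fvarP, hw])) (fun w hw => hjv w (by simp [Fm.fvarJ, hw]))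
            (fun w hw => hpc w (by simp [Fm.pconsts, hw])) (fun w hw => hjc w (by simp [Fm.jconsts, hw]))]
  | neg φ ih =>
      intro σ τ hpv hjv hpc hjc
      simp only [Fm.subst]
      rw [ih σ τ hpv hjv hpc hjc]
  | isTrue φ ih =>
      intro σ τ hpv hjv hpc hjc
      simp only [Fm.subst]
      rw [ih σ τ hpv hjv hpc hjc]
  | isFalse φ ih =>
      intro σ τ hpv hjv hpc hjc
      simp only [Fm.subst]
      rw [ih σ τ hpv hjv hpc hjc]
  | box φ ih =>
      intro σ τ hpv hjv hpc hjc
      simp only [Fm.subst]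
      rw [ih σ τ hpv hjv hpc hjc]
  | just φ t ih =>
      intro σ τ hpv hjv hpc hjc
      simp only [Fm.subst]
      rw [ih σ τ hpv (fun u hu => hjv u (by simp [Fm.fvarJ, hu])) hpc (fun c hc => hjc c (by simp [Fm.jconsts, hc])),
          Tm.subst_ext (fun u hu => hjv u (by simp [Fm.fvarJ, hu])) (fun c hc => hjc c (by simp [Fm.jconsts, hc]))]
  | teq s t =>
      intro σ τ _ hjv _ hjc
      simp only [Fm.subst]
      rw [Tm.subst_ext (fun u hu => hjv u (by simp [Fm.fvarJ, hu])) (fun c hc => hjc c (by simp [Fm.jconsts, hc])),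
          Tm.subst_ext (fun u hu => hjv u (by simp [Fm.fvarJ, hu])) (fun c hc => hjc c (by simp [Fm.jconsts, hc]))]
  | tle s t =>
      intro σ τ _ hjv _ hjc
      simp only [Fm.subst]
      rw [Tm.subst_ext (fun u hu => hjv u (by simp [Fm.fvarJ, hu])) (fun c hc => hjc c (by simp [Fm.jconsts, hc])),
          Tm.subst_ext (fun u hu => hjv u (by simp [Fm.fvarJ, hu])) (fun c hc => hjc c (by simp [Fm.jconsts, hc]))]
  | fAll x φ ih =>
      intro σ τ hpv hjv hpc hjc
      have hD : pD σ (.fAll x φ) = pD τ (.fAll x φ) := by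
        unfold pD
        rw [Finset.biUnion_congr (t₁ := fun w => (σ.pv w).fvarP) (t₂ := fun w => (τ.pv w).fvarP)
              rfl (fun w hw => by simp only [hpv w hw]),
            Finset.biUnion_congr (t₁ := fun d => (σ.pc d).fvarP) (t₂ := fun d => (τ.pc d).fvarP)
              rfl (fun d hd => by simp only [hpc d hd])]
      have hy : pForced σ (.fAll x φ) = pForced τ (.fAll x φ) := by
        rw [pForced_eq, pForced_eq, hD]
      simp only [Fm.subst]
      rw [hy]
      refine congrArg _ (ih _ _ ?_ hjv ?_ hjc)
      · intro w hw
        by_cases hwx : w = x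
        · simp [hwx, Subst.updP]
        · simp only [Subst.updP, Function.update_apply, if_neg hwx]
          exact hpv w (by simp [Fm.fvarP, Finset.mem_erase, hwx, hw])
      · exact hpc
  | jAll u φ ih =>
      intro σ τ hpv hjv hpc hjc
      have hD : jD σ (.jAll u φ) = jD τ (.jAll u φ) := by
        unfold jD
        rw [Finset.biUnion_congr (t₁ := fun w => (σ.pv w).fvarJ) (t₂ := fun w => (τ.pv w).fvarJ)
              rfl (fun w hw => by simp only [hpv w hw]),
            Finset.biUnion_congr (t₁ := fun d => (σ.pc d).fvarJ) (t₂ := fun d => (τ.pc d).fvarJ)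
              rfl (fun d hd => by simp only [hpc d hd]),
            Finset.biUnion_congr (t₁ := fun v => (σ.jv v).vars) (t₂ := fun v => (τ.jv v).vars)
              rfl (fun v hv => by simp only [hjv v hv]),
            Finset.biUnion_congr (t₁ := fun c => (σ.jc c).vars) (t₂ := fun c => (τ.jc c).vars)
              rfl (fun c hc => by simp only [hjc c hc])]
      have hv : jForced σ (.jAll u φ) = jForced τ (.jAll u φ) := by
        rw [jForced_eq, jForced_eq, hD]
      simp only [Fm.subst]
      rw [hv]
      refine congrArg _ (ih _ _ hpv ?_ hpc ?_)
      · intro w hw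
        by_cases hwu : w = u
        · simp [hwu, Subst.updJ]
        · simp only [Subst.updJ, Function.update_apply, if_neg hwu]
          exact hjv w (by simp [Fm.fvarJ, Finset.mem_erase, hwu, hw])
      · exact hjc

/-! ### composition -/

theorem pD_comp (φ : Fm) (σ τ : Subst) : pD τ (φ.subst σ) = pD (σ.comp τ) φ := by
  ext a
  constructor
  · intro ha
    rcases mem_pD.1 ha with ⟨w, hw, hm⟩ | ⟨d, hd, hm⟩
    · rw [Fm.fvarP_subst] at hw
      rcases mem_pD.1 hw with ⟨v, hv, h2⟩ | ⟨e, he, h2⟩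
      · exact mem_pD.2 (Or.inl ⟨v, hv, by simp only [Subst.comp]; rw [Fm.fvarP_subst]; exact mem_pD.2 (Or.inl ⟨w, h2, hm⟩)⟩)
      · exact mem_pD.2 (Or.inr ⟨e, he, by simp only [Subst.comp]; rw [Fm.fvarP_subst]; exact mem_pD.2 (Or.inl ⟨w, h2, hm⟩)⟩)
    · rw [Fm.pconsts_subst] at hd
      rcases mem_pcD.1 hd with ⟨v, hv, h2⟩ | ⟨e, he, h2⟩
      · exact mem_pD.2 (Or.inl ⟨v, hv, by simp only [Subst.comp]; rw [Fm.fvarP_subst]; exact mem_pD.2 (Or.inr ⟨d, h2, hm⟩)⟩)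
      · exact mem_pD.2 (Or.inr ⟨e, he, by simp only [Subst.comp]; rw [Fm.fvarP_subst]; exact mem_pD.2 (Or.inr ⟨d, h2, hm⟩)⟩)
  · intro ha
    rcases mem_pD.1 ha with ⟨w, hw, hm⟩ | ⟨d, hd, hm⟩
    · simp only [Subst.comp] at hm
      rw [Fm.fvarP_subst] at hm
      rcases mem_pD.1 hm with ⟨v, hv, h2⟩ | ⟨e, he, h2⟩
      · exact mem_pD.2 (Or.inl ⟨v, by rw [Fm.fvarP_subst]; exact mem_pD.2 (Or.inl ⟨w, hw, hv⟩), h2⟩)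
      · exact mem_pD.2 (Or.inr ⟨e, by rw [Fm.pconsts_subst]; exact mem_pcD.2 (Or.inl ⟨w, hw, he⟩), h2⟩)
    · simp only [Subst.comp] at hm
      rw [Fm.fvarP_subst] at hm
      rcases mem_pD.1 hm with ⟨v, hv, h2⟩ | ⟨e, he, h2⟩
      · exact mem_pD.2 (Or.inl ⟨v, by rw [Fm.fvarP_subst]; exact mem_pD.2 (Or.inr ⟨d, hd, hv⟩), h2⟩)
      · exact mem_pD.2 (Or.inr ⟨e, by rw [Fm.pconsts_subst]; exact mem_pcD.2 (Or.inr ⟨d, hd, he⟩), h2⟩)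

theorem jD_comp (φ : Fm) (σ τ : Subst) : jD τ (φ.subst σ) = jD (σ.comp τ) φ := by
  ext a
  constructor
  · intro ha
    rcases mem_jD.1 ha with (⟨w, hw, hm⟩ | ⟨d, hd, hm⟩) | ⟨v, hv, hm⟩ | ⟨c, hc, hm⟩
    · rw [Fm.fvarP_subst] at hw
      rcases mem_pD.1 hw with ⟨v, hv, h2⟩ | ⟨e, he, h2⟩
      · exact mem_jD.2 (Or.inl (Or.inl ⟨v, hv, by simp only [Subst.comp]; rw [Fm.fvarJ_subst]; exact mem_jD.2 (Or.inl (Or.inl ⟨w, h2, hm⟩))⟩))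
      · exact mem_jD.2 (Or.inl (Or.inr ⟨e, he, by simp only [Subst.comp]; rw [Fm.fvarJ_subst]; exact mem_jD.2 (Or.inl (Or.inl ⟨w, h2, hm⟩))⟩))
    · rw [Fm.pconsts_subst] at hd
      rcases mem_pcD.1 hd with ⟨v, hv, h2⟩ | ⟨e, he, h2⟩
      · exact mem_jD.2 (Or.inl (Or.inl ⟨v, hv, by simp only [Subst.comp]; rw [Fm.fvarJ_subst]; exact mem_jD.2 (Or.inl (Or.inr ⟨d, h2, hm⟩))⟩))
      · exact mem_jD.2 (Or.inl (Or.inr ⟨e, he, by simp only [Subst.comp]; rw [Fm.fvarJ_subst]; exact mem_jD.2 (Or.inl (Or.inr ⟨d, h2, hm⟩))⟩))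
    · rw [Fm.fvarJ_subst] at hv
      rcases mem_jD.1 hv with (⟨w, hw, h2⟩ | ⟨d, hd, h2⟩) | ⟨u, hu, h2⟩ | ⟨c, hc, h2⟩
      · exact mem_jD.2 (Or.inl (Or.inl ⟨w, hw, by simp only [Subst.comp]; rw [Fm.fvarJ_subst]; exact mem_jD.2 (Or.inr (Or.inl ⟨v, h2, hm⟩))⟩))
      · exact mem_jD.2 (Or.inl (Or.inr ⟨d, hd, by simp only [Subst.comp]; rw [Fm.fvarJ_subst]; exact mem_jD.2 (Or.inr (Or.inl ⟨v, h2, hm⟩))⟩))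
      · exact mem_jD.2 (Or.inr (Or.inl ⟨u, hu, by simp only [Subst.comp]; rw [Tm.vars_subst]; simp only [Finset.mem_union, Finset.mem_biUnion]; exact Or.inl ⟨v, h2, hm⟩⟩))
      · exact mem_jD.2 (Or.inr (Or.inr ⟨c, hc, by simp only [Subst.comp]; rw [Tm.vars_subst]; simp only [Finset.mem_union, Finset.mem_biUnion]; exact Or.inl ⟨v, h2, hm⟩⟩))
    · rw [Fm.jconsts_subst] at hc
      rcases mem_jcD.1 hc with (⟨w, hw, h2⟩ | ⟨d, hd, h2⟩) | ⟨u, hu, h2⟩ | ⟨e, he, h2⟩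
      · exact mem_jD.2 (Or.inl (Or.inl ⟨w, hw, by simp only [Subst.comp]; rw [Fm.fvarJ_subst]; exact mem_jD.2 (Or.inr (Or.inr ⟨c, h2, hm⟩))⟩))
      · exact mem_jD.2 (Or.inl (Or.inr ⟨d, hd, by simp only [Subst.comp]; rw [Fm.fvarJ_subst]; exact mem_jD.2 (Or.inr (Or.inr ⟨c, h2, hm⟩))⟩))
      · exact mem_jD.2 (Or.inr (Or.inl ⟨u, hu, by simp only [Subst.comp]; rw [Tm.vars_subst]; simp only [Finset.mem_union, Finset.mem_biUnion]; exact Or.inr ⟨c, h2, hm⟩⟩))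
      · exact mem_jD.2 (Or.inr (Or.inr ⟨e, he, by simp only [Subst.comp]; rw [Tm.vars_subst]; simp only [Finset.mem_union, Finset.mem_biUnion]; exact Or.inr ⟨c, h2, hm⟩⟩))
  · intro ha
    rcases mem_jD.1 ha with (⟨w, hw, hm⟩ | ⟨d, hd, hm⟩) | ⟨v, hv, hm⟩ | ⟨c, hc, hm⟩
    · simp only [Subst.comp] at hm; rw [Fm.fvarJ_subst] at hm
      rcases mem_jD.1 hm with (⟨w2, hw2, h2⟩ | ⟨d2, hd2, h2⟩) | ⟨u2, hu2, h2⟩ | ⟨c2, hc2, h2⟩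
      · exact mem_jD.2 (Or.inl (Or.inl ⟨w2, by rw [Fm.fvarP_subst]; exact mem_pD.2 (Or.inl ⟨w, hw, hw2⟩), h2⟩))
      · exact mem_jD.2 (Or.inl (Or.inr ⟨d2, by rw [Fm.pconsts_subst]; exact mem_pcD.2 (Or.inl ⟨w, hw, hd2⟩), h2⟩))
      · exact mem_jD.2 (Or.inr (Or.inl ⟨u2, by rw [Fm.fvarJ_subst]; exact mem_jD.2 (Or.inl (Or.inl ⟨w, hw, hu2⟩)), h2⟩))
      · exact mem_jD.2 (Or.inr (Or.inr ⟨c2, by rw [Fm.jconsts_subst]; exact mem_jcD.2 (Or.inl (Or.inl ⟨w, hw, hc2⟩)), h2⟩))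
    · simp only [Subst.comp] at hm; rw [Fm.fvarJ_subst] at hm
      rcases mem_jD.1 hm with (⟨w2, hw2, h2⟩ | ⟨d2, hd2, h2⟩) | ⟨u2, hu2, h2⟩ | ⟨c2, hc2, h2⟩
      · exact mem_jD.2 (Or.inl (Or.inl ⟨w2, by rw [Fm.fvarP_subst]; exact mem_pD.2 (Or.inr ⟨d, hd, hw2⟩), h2⟩))
      · exact mem_jD.2 (Or.inl (Or.inr ⟨d2, by rw [Fm.pconsts_subst]; exact mem_pcD.2 (Or.inr ⟨d, hd, hd2⟩), h2⟩))
      · exact mem_jD.2 (Or.inr (Or.inl ⟨u2, by rw [Fm.fvarJ_subst]; exact mem_jD.2 (Or.inl (Or.inr ⟨d, hd, hu2⟩)), h2⟩))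
      · exact mem_jD.2 (Or.inr (Or.inr ⟨c2, by rw [Fm.jconsts_subst]; exact mem_jcD.2 (Or.inl (Or.inr ⟨d, hd, hc2⟩)), h2⟩))
    · simp only [Subst.comp] at hm; rw [Tm.vars_subst] at hm
      simp only [Finset.mem_union, Finset.mem_biUnion] at hm
      rcases hm with ⟨u2, hu2, h2⟩ | ⟨c2, hc2, h2⟩
      · exact mem_jD.2 (Or.inr (Or.inl ⟨u2, by rw [Fm.fvarJ_subst]; exact mem_jD.2 (Or.inr (Or.inl ⟨v, hv, hu2⟩)), h2⟩))
      · exact mem_jD.2 (Or.inr (Or.inr ⟨c2, by rw [Fm.jconsts_subst]; exact mem_jcD.2 (Or.inr (Or.inl ⟨v, hv, hc2⟩)), h2⟩))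
    · simp only [Subst.comp] at hm; rw [Tm.vars_subst] at hm
      simp only [Finset.mem_union, Finset.mem_biUnion] at hm
      rcases hm with ⟨u2, hu2, h2⟩ | ⟨c2, hc2, h2⟩
      · exact mem_jD.2 (Or.inr (Or.inl ⟨u2, by rw [Fm.fvarJ_subst]; exact mem_jD.2 (Or.inr (Or.inr ⟨c, hc, hu2⟩)), h2⟩))
      · exact mem_jD.2 (Or.inr (Or.inr ⟨c2, by rw [Fm.jconsts_subst]; exact mem_jcD.2 (Or.inr (Or.inr ⟨c, hc, hc2⟩)), h2⟩))

theorem pForced_comp (φ : Fm) (σ τ : Subst) :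
    pForced τ (φ.subst σ) = pForced (σ.comp τ) φ := by
  rw [pForced_eq, pForced_eq, pD_comp]

theorem jForced_comp (φ : Fm) (σ τ : Subst) :
    jForced τ (φ.subst σ) = jForced (σ.comp τ) φ := by
  rw [jForced_eq, jForced_eq, jD_comp]


theorem Fm.subst_comp : ∀ (φ : Fm) (σ τ : Subst),
    (φ.subst σ).subst τ = φ.subst (σ.comp τ) := by
  intro φ
  induction φ with
  | pvar x => intro σ τ; simp [Fm.subst, Subst.comp]
  | pconst d => intro σ τ; simp [Fm.subst, Subst.comp]
  | imp φ ψ ih1 ih2 => intro σ τ; simp [Fm.subst, ih1, ih2]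
  | ideq φ ψ ih1 ih2 => intro σ τ; simp [Fm.subst, ih1, ih2]
  | ref φ ψ ih1 ih2 => intro σ τ; simp [Fm.subst, ih1, ih2]
  | neg φ ih => intro σ τ; simp [Fm.subst, ih]
  | isTrue φ ih => intro σ τ; simp [Fm.subst, ih]
  | isFalse φ ih => intro σ τ; simp [Fm.subst, ih]
  | box φ ih => intro σ τ; simp [Fm.subst, ih]
  | just φ t ih => intro σ τ; simp [Fm.subst, ih, Tm.subst_comp]
  | teq s t => intro σ τ; simp [Fm.subst, Tm.subst_comp]
  | tle s t => intro σ τ; simp [Fm.subst, Tm.subst_comp]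
  | fAll x φ ih =>
      intro σ τ
      have e1 : (Fm.fAll x φ).subst σ =
          .fAll (pForced σ (.fAll x φ)) (φ.subst (σ.updP x (.pvar (pForced σ (.fAll x φ))))) := rfl
      set y := pForced σ (.fAll x φ) with hy
      set σ' := σ.updP x (.pvar y) with hσ'
      set y' := pForced τ (.fAll y (φ.subst σ')) with hy'
      have e2 : ((Fm.fAll x φ).subst σ).subst τ =
          .fAll y' ((φ.subst σ').subst (τ.updP y (.pvar y'))) := by rw [e1]; rfl
      have hyy : y' = pForced (σ.comp τ) (.fAll x φ) := by
        rw [hy', show Fm.fAll y (φ.subst σ') = (Fm.fAll x φ).subst σ from e1.symm, pForced_comp]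
      have e3 : (Fm.fAll x φ).subst (σ.comp τ) =
          .fAll y' (φ.subst ((σ.comp τ).updP x (.pvar y'))) := by rw [hyy]; rfl
      rw [e2, e3, ih]
      refine congrArg _ (Fm.subst_ext φ _ _ ?_ ?_ ?_ ?_)
      · intro w hw
        by_cases hwx : w = x
        · subst hwx
          simp [Subst.comp, Subst.updP, hσ', Fm.subst]
        · simp only [Subst.comp, Subst.updP, Function.update_apply, if_neg hwx, hσ']
          apply Fm.subst_ext
          · intro v hv
            have hvy : v < y := by
              rw [hy]
              exact lt_pForced (mem_pD.2 (Or.inl ⟨w,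
                by simp [Fm.fvarP, Finset.mem_erase, hwx, hw], hv⟩))
            simp [Function.update_apply, Nat.ne_of_lt hvy]
          · intro v _; rfl
          · intro d _; rfl
          · intro c _; rfl
      · intro u _
        simp only [Subst.comp, Subst.updP, hσ']
        exact Tm.subst_congr rfl rfl
      · intro d hd
        simp only [Subst.comp, Subst.updP, hσ']
        apply Fm.subst_ext
        · intro v hv
          have hvy : v < y := by
            rw [hy]
            exact lt_pForced (mem_pD.2 (Or.inr ⟨d, by simpa [Fm.pconsts] using hd, hv⟩))
          simp [Function.update_apply, Nat.ne_of_lt hvy]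
        · intro v _; rfl
        · intro e _; rfl
        · intro c _; rfl
      · intro c _
        simp only [Subst.comp, Subst.updP, hσ']
        exact Tm.subst_congr rfl rfl
  | jAll u φ ih =>
      intro σ τ
      have e1 : (Fm.jAll u φ).subst σ =
          .jAll (jForced σ (.jAll u φ)) (φ.subst (σ.updJ u (.var (jForced σ (.jAll u φ))))) := rfl
      set v := jForced σ (.jAll u φ) with hv
      set σ' := σ.updJ u (.var v) with hσ'
      set v' := jForced τ (.jAll v (φ.subst σ')) with hv'
      have e2 : ((Fm.jAll u φ).subst σ).subst τ =
          .jAll v' ((φ.subst σ').subst (τ.updJ v (.var v'))) := by rw [e1]; rfl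
      have hvv : v' = jForced (σ.comp τ) (.jAll u φ) := by
        rw [hv', show Fm.jAll v (φ.subst σ') = (Fm.jAll u φ).subst σ from e1.symm, jForced_comp]
      have e3 : (Fm.jAll u φ).subst (σ.comp τ) =
          .jAll v' (φ.subst ((σ.comp τ).updJ u (.var v'))) := by rw [hvv]; rfl
      rw [e2, e3, ih]
      refine congrArg _ (Fm.subst_ext φ _ _ ?_ ?_ ?_ ?_)
      · intro w hw
        simp only [Subst.comp, Subst.updJ, hσ']
        apply Fm.subst_ext
        · intro a _; rfl
        · intro a ha
          have hav : a < v := by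
            rw [hv]
            exact lt_jForced (mem_jD.2 (Or.inl (Or.inl ⟨w, by simpa [Fm.fvarP] using hw, ha⟩)))
          simp [Function.update_apply, Nat.ne_of_lt hav]
        · intro d _; rfl
        · intro c _; rfl
      · intro w hw
        by_cases hwu : w = u
        · subst hwu
          simp [Subst.comp, Subst.updJ, hσ', Tm.subst]
        · simp only [Subst.comp, Subst.updJ, Function.update_apply, if_neg hwu, hσ']
          apply Tm.subst_ext
          · intro a ha
            have hav : a < v := by
              rw [hv]
              exact lt_jForced (mem_jD.2 (Or.inr (Or.inl ⟨w,
                by simp [Fm.fvarJ, Finset.mem_erase, hwu, hw], ha⟩)))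
            simp [Function.update_apply, Nat.ne_of_lt hav]
          · intro c _; rfl
      · intro d hd
        simp only [Subst.comp, Subst.updJ, hσ']
        apply Fm.subst_ext
        · intro a _; rfl
        · intro a ha
          have hav : a < v := by
            rw [hv]
            exact lt_jForced (mem_jD.2 (Or.inl (Or.inr ⟨d, by simpa [Fm.pconsts] using hd, ha⟩)))
          simp [Function.update_apply, Nat.ne_of_lt hav]
        · intro e _; rfl
        · intro c _; rfl
      · intro c hc
        simp only [Subst.comp, Subst.updJ, hσ']
        apply Tm.subst_ext
        · intro a ha
          have hav : a < v := by
            rw [hv]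
            exact lt_jForced (mem_jD.2 (Or.inr (Or.inr ⟨c, by simpa [Fm.jconsts] using hc, ha⟩)))
          simp [Function.update_apply, Nat.ne_of_lt hav]
        · intro e _; rfl


/-! ### alpha congruence preserves free variables -/

theorem alpha_fvarP_eq {φ ψ : Fm} (h : Alpha φ ψ) : φ.fvarP = ψ.fvarP := by
  induction h with
  | refl => rfl
  | symm _ ih => exact ih.symm
  | trans _ _ ih1 ih2 => exact ih1.trans ih2
  | imp _ _ ih1 ih2 => simp [Fm.fvarP, ih1, ih2]
  | ideq _ _ ih1 ih2 => simp [Fm.fvarP, ih1, ih2]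
  | ref _ _ ih1 ih2 => simp [Fm.fvarP, ih1, ih2]
  | neg _ ih => simp [Fm.fvarP, ih]
  | isTrue _ ih => simp [Fm.fvarP, ih]
  | isFalse _ ih => simp [Fm.fvarP, ih]
  | box _ ih => simp [Fm.fvarP, ih]
  | just t _ ih => simp [Fm.fvarP, ih]
  | jAll h1 h2 ih =>
      rename_i φ u v ψ
      simp only [Fm.fvarP]
      rw [ih]
      unfold Fm.subst1J
      rw [Fm.fvarP_subst]
      ext a
      rw [mem_pD]
      simp [Subst.updJ, Subst.id, Fm.fvarP]
  | fAll h1 h2 ih =>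
      rename_i φ x y ψ
      have key : ∀ a, a ∈ (ψ.subst1P y (Fm.pvar x)).fvarP ↔
          (a ≠ y ∧ a ∈ ψ.fvarP) ∨ (y ∈ ψ.fvarP ∧ a = x) := by
        intro a
        unfold Fm.subst1P
        rw [Fm.fvarP_subst, mem_pD]
        constructor
        · rintro (⟨w, hw, hm⟩ | ⟨d, hd, hm⟩)
          · by_cases hwy : w = y
            · subst hwy
              simp [Subst.updP, Fm.fvarP] at hm
              exact Or.inr ⟨hw, hm⟩
            · simp [Subst.updP, Subst.id, Function.update_apply, hwy, Fm.fvarP] at hm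
              subst hm
              exact Or.inl ⟨hwy, hw⟩
          · simp [Subst.updP, Subst.id, Fm.fvarP] at hm
        · rintro (⟨hay, ha⟩ | ⟨hy, hax⟩)
          · exact Or.inl ⟨a, ha, by simp [Subst.updP, Subst.id, Function.update_apply, hay, Fm.fvarP]⟩
          · exact Or.inl ⟨y, hy, by simp [Subst.updP, Fm.fvarP, hax]⟩
      simp only [Fm.fvarP]
      ext a
      simp only [Finset.mem_erase]
      constructor
      · rintro ⟨hax, ha⟩
        rw [ih] at ha
        rcases (key a).1 ha with ⟨hay, h⟩ | ⟨hy, hax'⟩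
        · exact ⟨hay, h⟩
        · exact absurd hax' hax
      · rintro ⟨hay, ha⟩
        refine ⟨?_, by rw [ih]; exact (key a).2 (Or.inl ⟨hay, ha⟩)⟩
        intro hax
        subst hax
        exact absurd ha (h2 hay)

theorem alpha_fvarJ_eq {φ ψ : Fm} (h : Alpha φ ψ) : φ.fvarJ = ψ.fvarJ := by
  induction h with
  | refl => rfl
  | symm _ ih => exact ih.symm
  | trans _ _ ih1 ih2 => exact ih1.trans ih2
  | imp _ _ ih1 ih2 => simp [Fm.fvarJ, ih1, ih2]
  | ideq _ _ ih1 ih2 => simp [Fm.fvarJ, ih1, ih2]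
  | ref _ _ ih1 ih2 => simp [Fm.fvarJ, ih1, ih2]
  | neg _ ih => simp [Fm.fvarJ, ih]
  | isTrue _ ih => simp [Fm.fvarJ, ih]
  | isFalse _ ih => simp [Fm.fvarJ, ih]
  | box _ ih => simp [Fm.fvarJ, ih]
  | just t _ ih => simp [Fm.fvarJ, ih]
  | fAll h1 h2 ih =>
      rename_i φ x y ψ
      simp only [Fm.fvarJ]
      rw [ih]
      unfold Fm.subst1P
      rw [Fm.fvarJ_subst]
      ext a
      rw [mem_jD]
      constructor
      · rintro ((⟨w, hw, hm⟩ | ⟨d, hd, hm⟩) | ⟨u, hu, hm⟩ | ⟨c, hc, hm⟩)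
        · by_cases hwy : w = y
          · subst hwy; simp [Subst.updP, Fm.fvarJ] at hm
          · simp [Subst.updP, Subst.id, Function.update_apply, hwy, Fm.fvarJ] at hm
        · simp [Subst.updP, Subst.id, Fm.fvarJ] at hm
        · simp [Subst.updP, Subst.id, Tm.vars] at hm
          subst hm; exact hu
        · simp [Subst.updP, Subst.id, Tm.consts, Tm.vars] at hm
      · intro ha
        exact Or.inr (Or.inl ⟨a, ha, by simp [Subst.updP, Subst.id, Tm.vars]⟩)
  | jAll h1 h2 ih =>
      rename_i φ u v ψ
      have key : ∀ a, a ∈ (ψ.subst1J v (Tm.var u)).fvarJ ↔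
          (a ≠ v ∧ a ∈ ψ.fvarJ) ∨ (v ∈ ψ.fvarJ ∧ a = u) := by
        intro a
        unfold Fm.subst1J
        rw [Fm.fvarJ_subst, mem_jD]
        constructor
        · rintro ((⟨w, hw, hm⟩ | ⟨d, hd, hm⟩) | ⟨w, hw, hm⟩ | ⟨c, hc, hm⟩)
          · simp [Subst.updJ, Subst.id, Fm.fvarJ] at hm
          · simp [Subst.updJ, Subst.id, Fm.fvarJ] at hm
          · by_cases hwv : w = v
            · subst hwv
              simp [Subst.updJ, Tm.vars] at hm
              exact Or.inr ⟨hw, hm⟩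
            · simp [Subst.updJ, Subst.id, Function.update_apply, hwv, Tm.vars] at hm
              subst hm
              exact Or.inl ⟨hwv, hw⟩
          · simp [Subst.updJ, Subst.id, Tm.vars] at hm
        · rintro (⟨hav, ha⟩ | ⟨hv, hau⟩)
          · exact Or.inr (Or.inl ⟨a, ha, by simp [Subst.updJ, Subst.id, Function.update_apply, hav, Tm.vars]⟩)
          · exact Or.inr (Or.inl ⟨v, hv, by simp [Subst.updJ, Tm.vars, hau]⟩)
      simp only [Fm.fvarJ]
      ext a
      simp only [Finset.mem_erase]
      constructor
      · rintro ⟨hau, ha⟩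
        rw [ih] at ha
        rcases (key a).1 ha with ⟨hav, h⟩ | ⟨hv, hau'⟩
        · exact ⟨hav, h⟩
        · exact absurd hau' hau
      · rintro ⟨hav, ha⟩
        refine ⟨?_, by rw [ih]; exact (key a).2 (Or.inl ⟨hav, ha⟩)⟩
        intro hau
        subst hau
        exact absurd ha (h2 hav)

/-! ### the identity substitution is an alpha-identity -/

theorem updP_self (y : ℕ) : Subst.id.updP y (Fm.pvar y) = Subst.id := by
  unfold Subst.updP Subst.id
  simp

theorem updJ_self (v : ℕ) : Subst.id.updJ v (Tm.var v) = Subst.id := by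
  unfold Subst.updJ Subst.id
  simp

theorem alpha_subst_id : ∀ φ : Fm, Alpha (φ.subst Subst.id) φ := by
  intro φ
  induction φ with
  | pvar x => exact Alpha.refl _
  | pconst d => exact Alpha.refl _
  | imp φ ψ ih1 ih2 => exact Alpha.imp ih1 ih2
  | ideq φ ψ ih1 ih2 => exact Alpha.ideq ih1 ih2
  | ref φ ψ ih1 ih2 => exact Alpha.ref ih1 ih2
  | neg φ ih => exact Alpha.neg ih
  | isTrue φ ih => exact Alpha.isTrue ih
  | isFalse φ ih => exact Alpha.isFalse ih
  | box φ ih => exact Alpha.box ih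
  | just φ t ih =>
      show Alpha (.just (φ.subst Subst.id) (t.subst Subst.id)) _
      rw [Tm.subst_id]
      exact Alpha.just t ih
  | teq s t =>
      show Alpha (.teq (s.subst Subst.id) (t.subst Subst.id)) _
      rw [Tm.subst_id, Tm.subst_id]
      exact Alpha.refl _
  | tle s t =>
      show Alpha (.tle (s.subst Subst.id) (t.subst Subst.id)) _
      rw [Tm.subst_id, Tm.subst_id]
      exact Alpha.refl _
  | fAll x φ ih =>
      simp only [Fm.subst]
      apply Alpha.fAll
      · exact Alpha.refl _
      · intro hyx hymem
        have : pForced Subst.id (.fAll x φ) ∈ pD Subst.id (.fAll x φ) :=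
          mem_pD.2 (Or.inl ⟨pForced Subst.id (.fAll x φ),
            by simp [Fm.fvarP, Finset.mem_erase, hyx, hymem],
            by simp [Subst.id, Fm.fvarP]⟩)
        exact absurd (lt_pForced this) (lt_irrefl _)
  | jAll u φ ih =>
      simp only [Fm.subst]
      apply Alpha.jAll
      · exact Alpha.refl _
      · intro hvu hvmem
        have : jForced Subst.id (.jAll u φ) ∈ jD Subst.id (.jAll u φ) :=
          mem_jD.2 (Or.inr (Or.inl ⟨jForced Subst.id (.jAll u φ),
            by simp [Fm.fvarJ, Finset.mem_erase, hvu, hvmem],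
            by simp [Subst.id, Tm.vars]⟩))
        exact absurd (lt_jForced this) (lt_irrefl _)

/-! ### alpha congruence of substitution -/

theorem alpha_subst_cong : ∀ (φ : Fm) (σ τ : Subst),
    (∀ w, Alpha (σ.pv w) (τ.pv w)) → σ.jv = τ.jv →
    (∀ d, Alpha (σ.pc d) (τ.pc d)) → σ.jc = τ.jc →
    Alpha (φ.subst σ) (φ.subst τ) := by
  intro φ
  induction φ with
  | pvar x => intro σ τ hpv _ _ _; exact hpv x
  | pconst d => intro σ τ _ _ hpc _; exact hpc d
  | imp φ ψ ih1 ih2 => intro σ τ hpv hjv hpc hjc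
                       exact Alpha.imp (ih1 σ τ hpv hjv hpc hjc) (ih2 σ τ hpv hjv hpc hjc)
  | ideq φ ψ ih1 ih2 => intro σ τ hpv hjv hpc hjc
                        exact Alpha.ideq (ih1 σ τ hpv hjv hpc hjc) (ih2 σ τ hpv hjv hpc hjc)
  | ref φ ψ ih1 ih2 => intro σ τ hpv hjv hpc hjc
                       exact Alpha.ref (ih1 σ τ hpv hjv hpc hjc) (ih2 σ τ hpv hjv hpc hjc)
  | neg φ ih => intro σ τ hpv hjv hpc hjc; exact Alpha.neg (ih σ τ hpv hjv hpc hjc)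
  | isTrue φ ih => intro σ τ hpv hjv hpc hjc; exact Alpha.isTrue (ih σ τ hpv hjv hpc hjc)
  | isFalse φ ih => intro σ τ hpv hjv hpc hjc; exact Alpha.isFalse (ih σ τ hpv hjv hpc hjc)
  | box φ ih => intro σ τ hpv hjv hpc hjc; exact Alpha.box (ih σ τ hpv hjv hpc hjc)
  | just φ t ih =>
      intro σ τ hpv hjv hpc hjc
      show Alpha (.just (φ.subst σ) (t.subst σ)) (.just (φ.subst τ) (t.subst τ))
      rw [Tm.subst_congr hjv hjc]
      exact Alpha.just _ (ih σ τ hpv hjv hpc hjc)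
  | teq s t =>
      intro σ τ _ hjv _ hjc
      show Alpha (.teq (s.subst σ) (t.subst σ)) (.teq (s.subst τ) (t.subst τ))
      rw [Tm.subst_congr hjv hjc, Tm.subst_congr hjv hjc]
      exact Alpha.refl _
  | tle s t =>
      intro σ τ _ hjv _ hjc
      show Alpha (.tle (s.subst σ) (t.subst σ)) (.tle (s.subst τ) (t.subst τ))
      rw [Tm.subst_congr hjv hjc, Tm.subst_congr hjv hjc]
      exact Alpha.refl _
  | fAll x φ ih =>
      intro σ τ hpv hjv hpc hjc
      have hD : pD σ (.fAll x φ) = pD τ (.fAll x φ) := by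
        unfold pD
        rw [Finset.biUnion_congr (t₁ := fun w => (σ.pv w).fvarP) (t₂ := fun w => (τ.pv w).fvarP)
              rfl (fun w _ => by simp only [alpha_fvarP_eq (hpv w)]),
            Finset.biUnion_congr (t₁ := fun d => (σ.pc d).fvarP) (t₂ := fun d => (τ.pc d).fvarP)
              rfl (fun d _ => by simp only [alpha_fvarP_eq (hpc d)])]
      have hy : pForced σ (.fAll x φ) = pForced τ (.fAll x φ) := by
        rw [pForced_eq, pForced_eq, hD]
      simp only [Fm.subst]
      rw [hy]
      apply Alpha.fAll
      · unfold Fm.subst1P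
        rw [updP_self]
        refine Alpha.trans (ih _ _ ?_ ?_ ?_ ?_) (Alpha.symm (alpha_subst_id _))
        · intro w
          by_cases hwx : w = x
          · simp [Subst.updP, hwx]; exact Alpha.refl _
          · simp only [Subst.updP, Function.update_apply, if_neg hwx]; exact hpv w
        · simp [Subst.updP, hjv]
        · exact hpc
        · exact hjc
      · exact fun h => absurd rfl h
  | jAll u φ ih =>
      intro σ τ hpv hjv hpc hjc
      have hD : jD σ (.jAll u φ) = jD τ (.jAll u φ) := by
        unfold jD
        rw [Finset.biUnion_congr (t₁ := fun w => (σ.pv w).fvarJ) (t₂ := fun w => (τ.pv w).fvarJ)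
              rfl (fun w _ => by simp only [alpha_fvarJ_eq (hpv w)]),
            Finset.biUnion_congr (t₁ := fun d => (σ.pc d).fvarJ) (t₂ := fun d => (τ.pc d).fvarJ)
              rfl (fun d _ => by simp only [alpha_fvarJ_eq (hpc d)]),
            Finset.biUnion_congr (t₁ := fun v => (σ.jv v).vars) (t₂ := fun v => (τ.jv v).vars)
              rfl (fun v _ => by simp only [hjv]),
            Finset.biUnion_congr (t₁ := fun c => (σ.jc c).vars) (t₂ := fun c => (τ.jc c).vars)
              rfl (fun c _ => by simp only [hjc])]
      have hv : jForced σ (.jAll u φ) = jForced τ (.jAll u φ) := by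
        rw [jForced_eq, jForced_eq, hD]
      simp only [Fm.subst]
      rw [hv]
      apply Alpha.jAll
      · unfold Fm.subst1J
        rw [updJ_self]
        refine Alpha.trans (ih _ _ ?_ ?_ ?_ ?_) (Alpha.symm (alpha_subst_id _))
        · exact hpv
        · simp [Subst.updJ, hjv]
        · exact hpc
        · exact hjc
      · exact fun h => absurd rfl h


/-! ### head shape of a substituted formula -/

theorem subst_eq_pvar {χ : Fm} {σ : Subst} {z : ℕ} (h : χ.subst σ = .pvar z) :
    (∃ w, χ = .pvar w ∧ σ.pv w = .pvar z) ∨ (∃ d, χ = .pconst d ∧ σ.pc d = .pvar z) := by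
  cases χ with
  | pvar w => exact Or.inl ⟨w, rfl, h⟩
  | pconst d => exact Or.inr ⟨d, rfl, h⟩
  | imp a b => simp [Fm.subst] at h
  | neg a => simp [Fm.subst] at h
  | ideq a b => simp [Fm.subst] at h
  | ref a b => simp [Fm.subst] at h
  | teq s t => simp [Fm.subst] at h
  | tle s t => simp [Fm.subst] at h
  | isTrue a => simp [Fm.subst] at h
  | isFalse a => simp [Fm.subst] at h
  | box a => simp [Fm.subst] at h
  | just a t => simp [Fm.subst] at h
  | fAll w a => simp [Fm.subst] at h
  | jAll w a => simp [Fm.subst] at h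

/-! ### transitivity of syntactical reference -/

theorem sref_trans_aux {φ ψ χ : Fm} (h₁ : Sref φ ψ) (h₂ : Sref ψ χ) : Sref φ χ := by
  obtain ⟨x, ψ', hψne, hxfree, hα1⟩ := h₁
  obtain ⟨y, χ', hχne, hyfree, hα2⟩ := h₂
  set z := (χ'.fvarP ∪ ψ'.fvarP).sup Nat.succ with hzdef
  have hzχ : z ∉ χ'.fvarP := fun h =>
    absurd (lt_sup_succ (Finset.mem_union_left _ h)) (lt_irrefl _)
  have hzψ : z ∉ ψ'.fvarP := fun h =>
    absurd (lt_sup_succ (Finset.mem_union_right _ h)) (lt_irrefl _)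
  set σz : Subst := Subst.id.updP x (.pvar z) with hσz
  set ψz : Fm := ψ'.subst σz with hψz
  set σc : Subst := Subst.id.updP y ψz with hσc
  refine ⟨z, χ'.subst σc, ?_, ?_, ?_⟩
  · -- not a variable
    intro h
    rcases subst_eq_pvar h with ⟨w, hχeq, hw⟩ | ⟨d, hχeq, hd⟩
    · by_cases hwy : w = y
      · subst hwy
        rw [hσc] at hw
        simp only [Subst.updP, Function.update_self] at hw
        rcases subst_eq_pvar (hw : ψ'.subst σz = .pvar z) with ⟨w', hψeq, hw'⟩ | ⟨d', hψeq, hd'⟩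
        · by_cases hwx : w' = x
          · subst hwx; exact hψne hψeq
          · rw [hσz] at hw'
            simp only [Subst.updP, Subst.id, Function.update_apply, if_neg hwx] at hw'
            have hwz : w' = z := by injection hw'
            subst hwz
            rw [hψeq] at hzψ
            simp [Fm.fvarP] at hzψ
        · rw [hσz] at hd'
          simp [Subst.updP, Subst.id] at hd'
      · rw [hσc] at hw
        simp only [Subst.updP, Subst.id, Function.update_apply, if_neg hwy] at hw
        have hwz : w = z := by injection hw
        subst hwz
        rw [hχeq] at hzχ
        simp [Fm.fvarP] at hzχ
    · rw [hχeq] at hyfree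
      simp [Fm.fvarP] at hyfree
  · -- z is free
    rw [Fm.fvarP_subst]
    refine mem_pD.2 (Or.inl ⟨y, hyfree, ?_⟩)
    rw [hσc]
    simp only [Subst.updP, Function.update_self]
    rw [hψz, Fm.fvarP_subst]
    refine mem_pD.2 (Or.inl ⟨x, hxfree, ?_⟩)
    rw [hσz]
    simp [Subst.updP, Fm.fvarP]
  · -- the alpha condition
    have e1 : (χ'.subst σc).subst1P z φ = χ'.subst1P y (ψ'.subst1P x φ) := by
      unfold Fm.subst1P
      rw [Fm.subst_comp]
      apply Fm.subst_ext
      · intro w hw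
        by_cases hwy : w = y
        · show (σc.pv w).subst (Subst.id.updP z φ) =
            (Subst.id.updP y (ψ'.subst (Subst.id.updP x φ))).pv w
          rw [hσc]
          simp only [Subst.updP, Function.update_apply, hwy, eq_self_iff_true, if_true]
          rw [hψz, Fm.subst_comp]
          apply Fm.subst_ext
          · intro w' hw'
            by_cases hwx : w' = x
            · subst hwx
              rw [hσz]
              simp [Subst.comp, Subst.updP, Fm.subst]
            · rw [hσz]
              simp only [Subst.comp, Subst.updP, Subst.id, Function.update_apply, if_neg hwx]
              have hwz : w' ≠ z := fun he => hzψ (he ▸ hw')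
              simp [Fm.subst, Subst.id, Function.update_apply, if_neg hwz]
          · intro u _; rfl
          · intro d _; rfl
          · intro c _; rfl
        · show (σc.pv w).subst (Subst.id.updP z φ) = _
          rw [hσc]
          simp only [Subst.updP, Subst.id, Function.update_apply, if_neg hwy]
          have hwz : w ≠ z := fun he => hzχ (he ▸ hw)
          simp [Fm.subst, Subst.id, Function.update_apply, if_neg hwz]
      · intro u _; rfl
      · intro d _; rfl
      · intro c _; rfl
    rw [e1]
    refine Alpha.trans ?_ hα2
    apply alpha_subst_cong
    · intro w
      by_cases hwy : w = y
      · subst hwy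
        simp only [Subst.updP, Function.update_self]
        exact hα1
      · simp only [Subst.updP, Subst.id, Function.update_apply, if_neg hwy]
        exact Alpha.refl _
    · rfl
    · intro d; exact Alpha.refl _
    · rfl

end EJ

/-- syntactical reference is transitive. -/
theorem sref_trans (φ ψ χ : EJ.Fm) (h₁ : EJ.Sref φ ψ) (h₂ : EJ.Sref ψ χ) :
    EJ.Sref φ χ :=
  EJ.sref_trans_aux h₁ h₂
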